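/- arXiv:1009.3983 — 3 statements merged into one kernel-verified Lean document; each statement's English description precedes it below -/
import Mathlib

section
/- Let N be an integer with 125 ∤ N. Then there exist at least two distinct nonzero residues b modulo 25 with the following property: for every positive integer P with P ≡ b (mod 25) and every integer x_0 such that 24P divides N − x_0^3 − 1402·P^3, the integer Q = (N − x_0^3 − 1402·P^3)/(24P) satisfies Q mod 25 ∉ {0, 10, 15}. -/
def fpair : ZMod 25 → ZMod 25 × ZMod 25 := fun n =>
  match n.val with
  | 1 => (2,7) | 2 => (6,21) | 3 => (9,24) | 4 => (13,18)
  | 6 => (2,22) | 7 => (1,11) | 8 => (4,14) | 9 => (8,13)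
  | 11 => (17,22) | 12 => (6,16) | 13 => (9,19) | 14 => (3,8)
  | 16 => (12,17) | 17 => (11,21) | 18 => (14,24) | 19 => (3,23)
  | 21 => (7,12) | 22 => (1,16) | 23 => (4,19) | 24 => (18,23)
  | _ => (5,10)

set_option maxRecDepth 40000 in
set_option maxHeartbeats 4000000 in
theorem keyA : ∀ n : ZMod 25, n ≠ 0 →
    (fpair n).1 ≠ 0 ∧ (fpair n).2 ≠ 0 ∧ (fpair n).1 ≠ (fpair n).2 ∧
    ∀ b : ZMod 25, (b = (fpair n).1 ∨ b = (fpair n).2) →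
      ∀ q x : ZMod 25, 24*b*q = n - x^3 - 1402*b^3 → ¬(q = 0 ∨ q = 10 ∨ q = 15) := by
  decide

lemma intCast_zmod_eq (n : ℕ) (z r : ℤ) (h : z % (n:ℤ) = r % (n:ℤ)) :
    (z : ZMod n) = (r : ZMod n) := by
  rw [ZMod.intCast_eq_intCast_iff]
  exact h

lemma cube5 (x : ℤ) (h : (25:ℤ) ∣ x ^ 3) : (5:ℤ) ∣ x := by
  have h5 : (5:ℤ) ∣ x ^ 3 := dvd_trans (by norm_num) h
  have hp : Prime (5:ℤ) := by norm_num
  exact hp.dvd_of_dvd_pow h5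

lemma goodA (N P Q x₀ : ℤ) (b : ZMod 25)
    (hkey : ∀ q x : ZMod 25, 24*b*q = (N : ZMod 25) - x^3 - 1402*b^3 →
      ¬(q = 0 ∨ q = 10 ∨ q = 15))
    (hPb : (P : ZMod 25) = b)
    (h24 : 24 * P * Q = N - x₀ ^ 3 - 1402 * P ^ 3)
    (hQ : Q % 25 = 0 ∨ Q % 25 = 10 ∨ Q % 25 = 15) : False := by
  have hcast : ((24 * P * Q : ℤ) : ZMod 25) = ((N - x₀ ^ 3 - 1402 * P ^ 3 : ℤ) : ZMod 25) := by
    rw [h24]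
  push_cast at hcast
  rw [hPb] at hcast
  refine hkey (Q : ZMod 25) (x₀ : ZMod 25) hcast ?_
  rcases hQ with h | h | h
  · exact Or.inl (by have := intCast_zmod_eq 25 Q 0 (by omega); simpa using this)
  · exact Or.inr (Or.inl (by have := intCast_zmod_eq 25 Q 10 (by omega); simpa using this))
  · exact Or.inr (Or.inr (by have := intCast_zmod_eq 25 Q 15 (by omega); simpa using this))

lemma goodB2 (N₁ P Q x₀ d : ℤ)
    (hkey : ∀ q : ZMod 5, (q = 0 ∨ q = 2 ∨ q = 3) → 24 * (d : ZMod 5) * q ≠ (N₁ : ZMod 5))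
    (hP : P % 25 = 5 * d)
    (h24 : 24 * P * Q = 25 * N₁ - x₀ ^ 3 - 1402 * P ^ 3)
    (hQ : Q % 25 = 0 ∨ Q % 25 = 10 ∨ Q % 25 = 15) : False := by
  have hdP : (5:ℤ) ∣ P := by omega
  obtain ⟨P', rfl⟩ := hdP
  have hdQ : (5:ℤ) ∣ Q := by omega
  obtain ⟨Q', rfl⟩ := hdQ
  have hx3 : x₀ ^ 3 = 25 * (N₁ - 24 * P' * Q' - 7010 * P' ^ 3) := by linear_combination h24
  have h5x : (5:ℤ) ∣ x₀ := cube5 x₀ ⟨_, hx3⟩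
  obtain ⟨x', rfl⟩ := h5x
  have h25 : (25:ℤ) * N₁ = 25 * (24 * P' * Q' + 7010 * P' ^ 3 + 5 * x' ^ 3) := by
    linear_combination -hx3
  have heq : N₁ = 24 * P' * Q' + 7010 * P' ^ 3 + 5 * x' ^ 3 :=
    mul_left_cancel₀ (by norm_num) h25
  have hcast : (N₁ : ZMod 5) = ((24 * P' * Q' + 7010 * P' ^ 3 + 5 * x' ^ 3 : ℤ) : ZMod 5) := by
    rw [← heq]
  push_cast at hcast
  have hp5 : (P' : ZMod 5) = (d : ZMod 5) := intCast_zmod_eq 5 P' d (by omega)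
  have h7010 : (7010 : ZMod 5) = 0 := by decide
  have h5z : (5 : ZMod 5) = 0 := by decide
  rw [hp5, h7010, h5z] at hcast
  ring_nf at hcast
  refine hkey (Q' : ZMod 5) ?_ ?_
  · rcases (show Q' % 5 = 0 ∨ Q' % 5 = 2 ∨ Q' % 5 = 3 by omega) with h | h | h
    · exact Or.inl (by simpa using intCast_zmod_eq 5 Q' 0 (by omega))
    · exact Or.inr (Or.inl (by simpa using intCast_zmod_eq 5 Q' 2 (by omega)))
    · exact Or.inr (Or.inr (by simpa using intCast_zmod_eq 5 Q' 3 (by omega)))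
  · rw [hcast]; ring

lemma B2case (N₁ d : ℤ)
    (hkey : ∀ q : ZMod 5, (q = 0 ∨ q = 2 ∨ q = 3) → 24 * (d : ZMod 5) * q ≠ (N₁ : ZMod 5)) :
    ∀ P : ℤ, (P : ZMod 25) = ((5 * d : ℤ) : ZMod 25) →
      ∀ x₀ : ℤ, 24 * P ∣ (25 * N₁ - x₀ ^ 3 - 1402 * P ^ 3) →
        ((25 * N₁ - x₀ ^ 3 - 1402 * P ^ 3) / (24 * P)) % 25 ∉ ({0, 10, 15} : Set ℤ) := by
  intro P hPb x₀ hdvd hQmem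
  have h24 : 24 * P * ((25 * N₁ - x₀ ^ 3 - 1402 * P ^ 3) / (24 * P))
      = 25 * N₁ - x₀ ^ 3 - 1402 * P ^ 3 := Int.mul_ediv_cancel' hdvd
  have hP : P % 25 = (5 * d) % 25 := (ZMod.intCast_eq_intCast_iff _ _ _).mp hPb
  simp only [Set.mem_insert_iff, Set.mem_singleton_iff] at hQmem
  by_cases hd : 0 ≤ d ∧ d < 5
  · exact goodB2 N₁ P _ x₀ d hkey (by omega) h24 hQmem
  · -- we'll only use d ∈ {1,2,3,4}; handle generically via d % 5
    exact goodB2 N₁ P _ x₀ (d % 5)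
      (by intro q hq; rw [intCast_zmod_eq 5 (d % 5) d (by omega)]; exact hkey q hq)
      (by omega) h24 hQmem

theorem two_good_residues_mod_25
    (N : ℤ) (hN : ¬ (125 ∣ N)) :
    ∃ b₁ b₂ : ZMod 25, b₁ ≠ 0 ∧ b₂ ≠ 0 ∧ b₁ ≠ b₂ ∧
      ∀ b ∈ ({b₁, b₂} : Set (ZMod 25)), ∀ P : ℤ, 0 < P → (P : ZMod 25) = b →
        ∀ x₀ : ℤ, 24 * P ∣ (N - x₀ ^ 3 - 1402 * P ^ 3) →
          ((N - x₀ ^ 3 - 1402 * P ^ 3) / (24 * P)) % 25 ∉ ({0, 10, 15} : Set ℤ) := by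
  by_cases h25 : (25:ℤ) ∣ N
  · -- 25 ∣ N, 125 ∤ N
    obtain ⟨N₁, rfl⟩ := h25
    have hm : N₁ % 5 = 1 ∨ N₁ % 5 = 2 ∨ N₁ % 5 = 3 ∨ N₁ % 5 = 4 := by omega
    have hkey : ∀ d : ℤ, (∀ q : ZMod 5, (q = 0 ∨ q = 2 ∨ q = 3) →
        24 * (d : ZMod 5) * q ≠ (((N₁ % 5) : ℤ) : ZMod 5)) →
        ∀ q : ZMod 5, (q = 0 ∨ q = 2 ∨ q = 3) → 24 * (d : ZMod 5) * q ≠ (N₁ : ZMod 5) := by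
      intro d h q hq
      rw [intCast_zmod_eq 5 N₁ (N₁ % 5) (by omega)]
      exact h q hq
    rcases hm with h | h | h | h
    · refine ⟨5, 20, by decide, by decide, by decide, ?_⟩
      intro b hb P _ hPb x₀
      simp only [Set.mem_insert_iff, Set.mem_singleton_iff] at hb
      rcases hb with rfl | rfl
      · exact B2case N₁ 1 (hkey 1 (by rw [h]; decide)) P (by rw [hPb]; decide) x₀
      · exact B2case N₁ 4 (hkey 4 (by rw [h]; decide)) P (by rw [hPb]; decide) x₀
    · refine ⟨10, 15, by decide, by decide, by decide, ?_⟩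
      intro b hb P _ hPb x₀
      simp only [Set.mem_insert_iff, Set.mem_singleton_iff] at hb
      rcases hb with rfl | rfl
      · exact B2case N₁ 2 (hkey 2 (by rw [h]; decide)) P (by rw [hPb]; decide) x₀
      · exact B2case N₁ 3 (hkey 3 (by rw [h]; decide)) P (by rw [hPb]; decide) x₀
    · refine ⟨10, 15, by decide, by decide, by decide, ?_⟩
      intro b hb P _ hPb x₀
      simp only [Set.mem_insert_iff, Set.mem_singleton_iff] at hb
      rcases hb with rfl | rfl
      · exact B2case N₁ 2 (hkey 2 (by rw [h]; decide)) P (by rw [hPb]; decide) x₀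
      · exact B2case N₁ 3 (hkey 3 (by rw [h]; decide)) P (by rw [hPb]; decide) x₀
    · refine ⟨5, 20, by decide, by decide, by decide, ?_⟩
      intro b hb P _ hPb x₀
      simp only [Set.mem_insert_iff, Set.mem_singleton_iff] at hb
      rcases hb with rfl | rfl
      · exact B2case N₁ 1 (hkey 1 (by rw [h]; decide)) P (by rw [hPb]; decide) x₀
      · exact B2case N₁ 4 (hkey 4 (by rw [h]; decide)) P (by rw [hPb]; decide) x₀
  · -- 25 ∤ N
    have hn0 : (N : ZMod 25) ≠ 0 := by
      intro h0
      exact h25 (by exact_mod_cast (ZMod.intCast_zmod_eq_zero_iff_dvd N 25).mp h0)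
    obtain ⟨h1, h2, h3, h4⟩ := keyA (N : ZMod 25) hn0
    refine ⟨(fpair (N : ZMod 25)).1, (fpair (N : ZMod 25)).2, h1, h2, h3, ?_⟩
    intro b hb P _ hPb x₀ hdvd hQmem
    simp only [Set.mem_insert_iff, Set.mem_singleton_iff] at hb hQmem
    have h24 : 24 * P * ((N - x₀ ^ 3 - 1402 * P ^ 3) / (24 * P))
        = N - x₀ ^ 3 - 1402 * P ^ 3 := Int.mul_ediv_cancel' hdvd
    exact goodA N P _ x₀ b (h4 b hb) hPb h24 hQmem
end

section
/- For every residue r modulo 25 with r ≢ 0 (mod 25), there exists a squarefree integer P_0 with 26141 ≤ P_0 ≤ 26669, P_0 ≡ 1 (mod 4), P_0 ≡ r (mod 25), and every prime factor of P_0 congruent to 5 modulo 6. -/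
/-! A finite check: the prime factorization of each entry of Table 2 consists of distinct primes
`≡ 5 (mod 6)`, and the residues of the entries modulo 25 exhaust the nonzero classes. -/

theorem Nat.forall_prime_dvd_iff_forall_mem_primeFactorsList {n : ℕ} (hn : n ≠ 0)
    {P : ℕ → Prop} : (∀ p, p.Prime → p ∣ n → P p) ↔ ∀ p ∈ n.primeFactorsList, P p := by
  simp only [Nat.mem_primeFactorsList hn, and_imp]

def tableTwo : List ℕ :=
  [26141, 26153, 26177, 26185, 26189, 26237, 26249, 26261, 26281, 26297, 26305, 26309, 26321,
    26329, 26345, 26357, 26365, 26389, 26393, 26401, 26417, 26461, 26473, 26477, 26485, 26489,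
    26501, 26513, 26521, 26545, 26561, 26573, 26597, 26609, 26633, 26653, 26665, 26669]

theorem tableTwo_bounds : ∀ n ∈ tableTwo, 26141 ≤ n ∧ n ≤ 26669 ∧ n % 4 = 1 := by
  decide

theorem tableTwo_primeFactorsList :
    ∀ n ∈ tableTwo, n.primeFactorsList.Nodup ∧ ∀ p ∈ n.primeFactorsList, p % 6 = 5 := by
  simp only [tableTwo, List.forall_mem_cons, Nat.primeFactorsList_ofNat]
  norm_num

theorem tableTwo_covers (r : ZMod 25) (hr : r ≠ 0) : ∃ n ∈ tableTwo, (n : ZMod 25) = r := by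
  revert r
  decide

theorem table_two_covers_all_residues
    (r : ZMod 25) (hr : r ≠ 0) :
    ∃ P₀ : ℕ, Squarefree P₀ ∧ 26141 ≤ P₀ ∧ P₀ ≤ 26669 ∧ P₀ % 4 = 1 ∧
      (P₀ : ZMod 25) = r ∧ ∀ p : ℕ, p.Prime → p ∣ P₀ → p % 6 = 5 := by
  obtain ⟨n, hn, rfl⟩ := tableTwo_covers r hr
  obtain ⟨hlo, hhi, hmod4⟩ := tableTwo_bounds n hn
  obtain ⟨hnodup, hmod6⟩ := tableTwo_primeFactorsList n hn
  have hn0 : n ≠ 0 := by omega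
  exact ⟨n, (Nat.squarefree_iff_nodup_primeFactorsList hn0).2 hnodup, hlo, hhi, hmod4, rfl,
    (Nat.forall_prime_dvd_iff_forall_mem_primeFactorsList hn0).2 hmod6⟩
end

section
/- The integers 92437 = 23·4019 and 96037 = 137·701 are both squarefree with all prime factors congruent to 5 modulo 6 and are both congruent to 37 modulo 100, and there is no integer strictly between 92437 and 96037 that is squarefree, has all prime factors congruent to 5 modulo 6, and is congruent to 37 modulo 100; in particular the ratio 96037/92437 exceeds 1.0389. -/
lemma sqfree_two_primes {p q : ℕ} (hp : p.Prime) (hq : q.Prime) (h : p ≠ q) :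
    Squarefree (p * q) :=
  (Nat.squarefree_mul ((Nat.coprime_primes hp hq).mpr h)).mpr
    ⟨hp.prime.squarefree, hq.prime.squarefree⟩

lemma factors_two_primes {p q r : ℕ} (hp : p.Prime) (hq : q.Prime) (hr : r.Prime)
    (h : r ∣ p * q) : r = p ∨ r = q := by
  rcases (Nat.Prime.dvd_mul hr).mp h with h' | h'
  · exact Or.inl ((Nat.prime_dvd_prime_iff_eq hr hp).mp h')
  · exact Or.inr ((Nat.prime_dvd_prime_iff_eq hr hq).mp h')

theorem gap_at_92437 :
    92437 = 23 * 4019 ∧ 96037 = 137 * 701 ∧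
    Squarefree (92437 : ℕ) ∧ (∀ p : ℕ, p.Prime → p ∣ 92437 → p % 6 = 5) ∧
    92437 % 100 = 37 ∧
    Squarefree (96037 : ℕ) ∧ (∀ p : ℕ, p.Prime → p ∣ 96037 → p % 6 = 5) ∧
    96037 % 100 = 37 ∧
    (∀ m : ℕ, 92437 < m → m < 96037 →
      ¬ (Squarefree m ∧ (∀ p : ℕ, p.Prime → p ∣ m → p % 6 = 5) ∧ m % 100 = 37)) ∧
    (96037 : ℝ) / 92437 > 1.0389 := by
  have h23 : Nat.Prime 23 := by norm_num
  have h4019 : Nat.Prime 4019 := by norm_num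
  have h137 : Nat.Prime 137 := by norm_num
  have h701 : Nat.Prime 701 := by norm_num
  refine ⟨by norm_num, by norm_num, ?_, ?_, by norm_num, ?_, ?_, by norm_num, ?_, by norm_num⟩
  · have := sqfree_two_primes h23 h4019 (by norm_num)
    norm_num at this ⊢
    exact this
  · intro p pp hd
    have h : p ∣ 23 * 4019 := by norm_num at hd ⊢; exact hd
    rcases factors_two_primes h23 h4019 pp h with rfl | rfl <;> norm_num
  · have := sqfree_two_primes h137 h701 (by norm_num)
    norm_num at this ⊢
    exact this
  · intro p pp hd
    have h : p ∣ 137 * 701 := by norm_num at hd ⊢; exact hd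
    rcases factors_two_primes h137 h701 pp h with rfl | rfl <;> norm_num
  intro m h1 h2 ⟨hsf, hp, hm⟩
  obtain ⟨q, rfl⟩ : ∃ q, m = 100 * q + 37 := ⟨m / 100, by omega⟩
  have hq1 : 925 ≤ q := by omega
  have hq2 : q ≤ 959 := by omega
  interval_cases q
  · exact absurd (hp 37 (by norm_num) (by norm_num)) (by norm_num)
  · exact absurd (hsf 3 (by norm_num)) (by norm_num)
  · exact absurd (hp 92737 (by norm_num) (by norm_num)) (by norm_num)
  · exact absurd (hp 43 (by norm_num) (by norm_num)) (by norm_num)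
  · exact absurd (hp 3 (by norm_num) (by norm_num)) (by norm_num)
  · exact absurd (hp 7 (by norm_num) (by norm_num)) (by norm_num)
  · exact absurd (hp 8467 (by norm_num) (by norm_num)) (by norm_num)
  · exact absurd (hp 3 (by norm_num) (by norm_num)) (by norm_num)
  · exact absurd (hp 93337 (by norm_num) (by norm_num)) (by norm_num)
  · exact absurd (hp 223 (by norm_num) (by norm_num)) (by norm_num)
  · exact absurd (hsf 3 (by norm_num)) (by norm_num)
  · exact absurd (hp 93637 (by norm_num) (by norm_num)) (by norm_num)
  · exact absurd (hsf 7 (by norm_num)) (by norm_num)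
  · exact absurd (hp 3 (by norm_num) (by norm_num)) (by norm_num)
  · exact absurd (hp 93937 (by norm_num) (by norm_num)) (by norm_num)
  · exact absurd (hp 271 (by norm_num) (by norm_num)) (by norm_num)
  · exact absurd (hp 3 (by norm_num) (by norm_num)) (by norm_num)
  · exact absurd (hp 13 (by norm_num) (by norm_num)) (by norm_num)
  · exact absurd (hp 3253 (by norm_num) (by norm_num)) (by norm_num)
  · exact absurd (hsf 3 (by norm_num)) (by norm_num)
  · exact absurd (hp 67 (by norm_num) (by norm_num)) (by norm_num)
  · exact absurd (hp 937 (by norm_num) (by norm_num)) (by norm_num)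
  · exact absurd (hp 3 (by norm_num) (by norm_num)) (by norm_num)
  · exact absurd (hp 94837 (by norm_num) (by norm_num)) (by norm_num)
  · exact absurd (hp 139 (by norm_num) (by norm_num)) (by norm_num)
  · exact absurd (hp 3 (by norm_num) (by norm_num)) (by norm_num)
  · exact absurd (hp 7 (by norm_num) (by norm_num)) (by norm_num)
  · exact absurd (hp 727 (by norm_num) (by norm_num)) (by norm_num)
  · exact absurd (hsf 3 (by norm_num)) (by norm_num)
  · exact absurd (hp 19 (by norm_num) (by norm_num)) (by norm_num)
  · exact absurd (hp 13 (by norm_num) (by norm_num)) (by norm_num)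
  · exact absurd (hp 3 (by norm_num) (by norm_num)) (by norm_num)
  · exact absurd (hp 95737 (by norm_num) (by norm_num)) (by norm_num)
  · exact absurd (hp 7 (by norm_num) (by norm_num)) (by norm_num)
  · exact absurd (hp 3 (by norm_num) (by norm_num)) (by norm_num)
end
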